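/- arXiv:2104.13182 — 3 statements merged into one kernel-verified Lean document; each statement's English description precedes it below -/
import Mathlib

section
/- Let X and Y be independent nonnegative random variables with PDFs f_X(x) = 2π λ_B x exp(−π λ_B x²) and f_Y(y) = 2π λ_R y exp(−π λ_R y²) (Rayleigh-type distributions). Then Z = XY has PDF f_Z(z) = 4π² z λ_B λ_R K_0(2π z √(λ_B λ_R)), where K_0 is the modified Bessel function of the second kind of order 0. -/
/-!
The law of `XY` is the multiplicative convolution of the laws of `X` and `Y`, whose density is
`z ↦ ∫ f_X(x) f_Y(z/x) dx/|x|`. For the two Rayleigh densities and `z > 0` the integrand is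
`4π² z λ_B λ_R x⁻¹ exp (-(π λ_B x² + π λ_R z² / x²))` on `x > 0`, and the substitution
`x = c e^s` turns the exponent into `-2π z √(λ_B λ_R) cosh (2s)`; the resulting integral over
`s ∈ ℝ` is, by evenness of `cosh`, the integral defining `K₀`.
-/

open Real MeasureTheory ProbabilityTheory

/-- Modified Bessel function of the second kind of order 0,
via the representation `K₀(x) = ∫_0^∞ exp(−x cosh t) dt`. -/
noncomputable def besselK0 (x : ℝ) : ℝ :=
  ∫ t in Set.Ioi (0:ℝ), Real.exp (-(x * Real.cosh t))

open Set ENNReal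

theorem Real.lintegral_comp_mul_left {F : ℝ → ℝ≥0∞} (hF : Measurable F) {a : ℝ}
    (ha : a ≠ 0) :
    ∫⁻ y, F (a * y) = ENNReal.ofReal |a⁻¹| * ∫⁻ z, F z := by
  rw [← lintegral_map hF (measurable_const_mul a), Real.map_volume_mul_left ha,
    lintegral_smul_measure, smul_eq_mul]

theorem lintegral_comp_abs {F : ℝ → ℝ≥0∞} (hF : Measurable F) :
    ∫⁻ s, F |s| = 2 * ∫⁻ s in Ioi 0, F s := by
  set G := (Ioi (0 : ℝ)).indicator F
  have hsplit : ∀ s : ℝ, s ≠ 0 → F |s| = G s + G (-s) := by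
    intro s hs
    rcases hs.lt_or_gt with hs | hs
    · simp [G, abs_of_neg hs, hs, hs.not_gt]
    · simp [G, abs_of_pos hs, hs, hs.not_gt]
  calc ∫⁻ s, F |s| = ∫⁻ s, G s + G (-s) :=
        lintegral_congr_ae ((Measure.ae_ne volume 0).mono hsplit)
    _ = 2 * ∫⁻ s, G s := by
        rw [lintegral_add_left (hF.indicator measurableSet_Ioi), lintegral_neg_eq_self, two_mul]
    _ = 2 * ∫⁻ s in Ioi 0, F s := by rw [lintegral_indicator measurableSet_Ioi]

theorem lintegral_Ioi_inv_mul_eq_lintegral_comp_exp {c : ℝ} (hc : 0 < c)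
    (F : ℝ → ℝ≥0∞) :
    ∫⁻ x in Ioi 0, ENNReal.ofReal x⁻¹ * F x = ∫⁻ s, F (c * exp s) := by
  have himage : (fun s => c * exp s) '' univ = Ioi 0 := by
    rw [image_univ, ← image_univ, ← image_image (c * ·), image_univ, Real.range_exp,
      image_mul_left_Ioi hc, mul_zero]
  have hinj : InjOn (fun s => c * exp s) univ := fun s _ t _ hst =>
    exp_injective (mul_left_cancel₀ hc.ne' hst)
  rw [← himage, lintegral_image_eq_lintegral_abs_deriv_mul MeasurableSet.univ
    (fun s _ => ((hasDerivAt_exp s).const_mul c).hasDerivWithinAt) hinj, Measure.restrict_univ]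
  refine lintegral_congr fun s => ?_
  rw [← mul_assoc, ← ENNReal.ofReal_mul (abs_nonneg _), abs_of_pos (by positivity),
    mul_inv_cancel₀ (by positivity), ENNReal.ofReal_one, one_mul]

theorem Real.self_le_cosh (t : ℝ) : t ≤ cosh t := by
  rcases le_or_gt 0 t with ht | ht
  · exact (self_le_sinh_iff.mpr ht).trans (sinh_lt_cosh t).le
  · linarith [one_le_cosh t]

theorem integrableOn_exp_neg_mul_cosh {k : ℝ} (hk : 0 < k) :
    IntegrableOn (fun t => exp (-(k * cosh t))) (Ioi 0) := by
  refine (exp_neg_integrableOn_Ioi 0 hk).mono' (by fun_prop) (ae_of_all _ fun t => ?_)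
  rw [norm_of_nonneg (exp_pos _).le, exp_le_exp]
  nlinarith [self_le_cosh t]

theorem lintegral_exp_neg_mul_cosh {k : ℝ} (hk : 0 < k) :
    ∫⁻ s, ENNReal.ofReal (exp (-(k * cosh s))) = 2 * ENNReal.ofReal (besselK0 k) := by
  calc ∫⁻ s, ENNReal.ofReal (exp (-(k * cosh s)))
      = ∫⁻ s, ENNReal.ofReal (exp (-(k * cosh |s|))) := by simp only [cosh_abs]
    _ = 2 * ENNReal.ofReal (besselK0 k) := by
      rw [lintegral_comp_abs (F := fun t => ENNReal.ofReal (exp (-(k * cosh t)))) (by fun_prop),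
        besselK0, ofReal_integral_eq_lintegral_ofReal (integrableOn_exp_neg_mul_cosh hk)
          (ae_of_all _ fun t => (exp_pos _).le)]

theorem lintegral_inv_mul_exp_neg_mul_sq_add_div_sq {a b : ℝ} (ha : 0 < a) (hb : 0 < b) :
    ∫⁻ x in Ioi 0, ENNReal.ofReal x⁻¹ * ENNReal.ofReal (exp (-(a * x ^ 2 + b / x ^ 2))) =
      ENNReal.ofReal (besselK0 (2 * √(a * b))) := by
  -- `c⁴ = b / a` balances the two terms of the exponent along `x = c e^s`
  set c := √(√b / √a)
  have hc : 0 < c := by positivity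
  have hc2 : c ^ 2 = √b / √a := sq_sqrt (by positivity)
  have hexponent : ∀ s,
      a * (c * exp s) ^ 2 + b / (c * exp s) ^ 2 = 2 * √(a * b) * cosh (2 * s) := by
    intro s
    have hexp : exp (2 * s) = exp s ^ 2 := by rw [← exp_nat_mul]; norm_num
    have : 0 < √a := sqrt_pos.mpr ha
    have : 0 < √b := sqrt_pos.mpr hb
    rw [mul_pow, hc2, cosh_eq, sqrt_mul ha.le, exp_neg, hexp]
    field_simp
    rw [sq_sqrt ha.le, sq_sqrt hb.le]
    ring
  rw [lintegral_Ioi_inv_mul_eq_lintegral_comp_exp hc]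
  simp_rw [hexponent]
  rw [lintegral_comp_mul_left (F := fun t => ENNReal.ofReal (exp (-(2 * √(a * b) * cosh t))))
      (by fun_prop) two_ne_zero,
    lintegral_exp_neg_mul_cosh (by positivity), abs_of_pos (by norm_num),
    ENNReal.ofReal_inv_of_pos two_pos, ENNReal.ofReal_ofNat, ← mul_assoc,
    ENNReal.inv_mul_cancel two_ne_zero ofNat_ne_top, one_mul]

section ProductDensity

noncomputable def mellinConv (f g : ℝ → ℝ≥0∞) (z : ℝ) : ℝ≥0∞ :=
  ∫⁻ x, f x * ENNReal.ofReal |x|⁻¹ * g (z / x)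

variable {f g : ℝ → ℝ≥0∞}

theorem measurable_mellinConv (hf : Measurable f) (hg : Measurable g) :
    Measurable (mellinConv f g) :=
  Measurable.lintegral_prod_right'
    (f := fun p : ℝ × ℝ => f p.2 * ENNReal.ofReal |p.2|⁻¹ * g (p.1 / p.2)) (by fun_prop)

theorem withDensity_mconv_withDensity (hf : Measurable f) (hg : Measurable g) :
    volume.withDensity f ∗ₘ volume.withDensity g = volume.withDensity (mellinConv f g) := by
  ext s hs
  have hs1 : Measurable (s.indicator (1 : ℝ → ℝ≥0∞)) := measurable_one.indicator hs
  have hslice : ∀ x : ℝ, x ≠ 0 → ∫⁻ y, s.indicator 1 (x * y) ∂volume.withDensity g =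
      ENNReal.ofReal |x|⁻¹ * ∫⁻ z in s, g (z / x) := by
    intro x hx
    have hpt : ∀ y, g y * s.indicator 1 (x * y) = s.indicator (fun z => g (z / x)) (x * y) := by
      intro y
      by_cases hy : x * y ∈ s <;> simp [hy, mul_div_cancel_left₀ _ hx]
    have hmeas : Measurable fun y => s.indicator 1 (x * y) := hs1.comp (measurable_const_mul x)
    rw [lintegral_withDensity_eq_lintegral_mul _ hg hmeas]
    simp only [Pi.mul_apply, hpt]
    rw [lintegral_comp_mul_left (F := s.indicator fun z => g (z / x))
      ((hg.comp (measurable_id.div_const x)).indicator hs) hx, lintegral_indicator hs, abs_inv]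
  have hmeas : Measurable fun x => ∫⁻ y, s.indicator 1 (x * y) ∂volume.withDensity g :=
    (hs1.comp measurable_mul).lintegral_prod_right'
  rw [withDensity_apply _ hs, ← lintegral_indicator_one hs, Measure.lintegral_mconv hs1,
    lintegral_withDensity_eq_lintegral_mul _ hf hmeas]
  simp only [Pi.mul_apply]
  calc ∫⁻ x, f x * ∫⁻ y, s.indicator 1 (x * y) ∂volume.withDensity g
      = ∫⁻ x, ∫⁻ z in s, f x * ENNReal.ofReal |x|⁻¹ * g (z / x) := by
        refine lintegral_congr_ae ((Measure.ae_ne volume 0).mono fun x hx => ?_)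
        dsimp only
        rw [hslice x hx, ← mul_assoc, lintegral_const_mul _ (by fun_prop)]
    _ = ∫⁻ z in s, mellinConv f g z := lintegral_lintegral_swap (by fun_prop)

theorem ProbabilityTheory.IndepFun.pdf_mul_ae_eq_mellinConv {Ω : Type*} [MeasurableSpace Ω]
    {P : Measure Ω} [IsFiniteMeasure P] {X Y : Ω → ℝ} (hX : Measurable X) (hY : Measurable Y)
    (hind : IndepFun X Y P) (hf : Measurable f) (hg : Measurable g)
    (hlawX : P.map X = volume.withDensity f) (hlawY : P.map Y = volume.withDensity g) :
    pdf (X * Y) P =ᵐ[volume] mellinConv f g := by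
  rw [pdf_def, hind.map_mul_eq_map_mconv_map hX hY, hlawX, hlawY,
    withDensity_mconv_withDensity hf hg]
  exact Measure.rnDeriv_withDensity _ (measurable_mellinConv hf hg)

end ProductDensity

theorem map_eq_withDensity_of_pdf_ae_eq {Ω E : Type*} [MeasurableSpace Ω] [MeasurableSpace E]
    {P : Measure Ω} [IsProbabilityMeasure P] {μ : Measure E} {X : Ω → E}
    (hX : AEMeasurable X P)
    {f : E → ℝ≥0∞} (hpdf : pdf X P μ =ᵐ[μ] f) (hf : ∫⁻ x, f x ∂μ = 1) :
    P.map X = μ.withDensity f := by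
  have : IsProbabilityMeasure (μ.withDensity f) :=
    ⟨by rw [withDensity_apply _ MeasurableSet.univ, Measure.restrict_univ, hf]⟩
  have : IsProbabilityMeasure (P.map X) := Measure.isProbabilityMeasure_map hX
  refine (Measure.eq_of_le_of_isProbabilityMeasure ?_).symm
  rw [← withDensity_congr_ae hpdf]
  exact withDensity_pdf_le_map X P μ

section Rayleigh

noncomputable def rayleighDensity (lam x : ℝ) : ℝ≥0∞ :=
  ENNReal.ofReal (if 0 < x then 2 * π * lam * x * exp (-(π * lam * x ^ 2)) else 0)

variable {lam : ℝ}

theorem rayleighDensity_of_pos {x : ℝ} (hx : 0 < x) :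
    rayleighDensity lam x = ENNReal.ofReal (2 * π * lam * x * exp (-(π * lam * x ^ 2))) := by
  rw [rayleighDensity, if_pos hx]

theorem rayleighDensity_of_nonpos {x : ℝ} (hx : x ≤ 0) : rayleighDensity lam x = 0 := by
  rw [rayleighDensity, if_neg hx.not_gt, ENNReal.ofReal_zero]

theorem measurable_rayleighDensity : Measurable (rayleighDensity lam) :=
  (Measurable.ite measurableSet_Ioi (by fun_prop) measurable_const).ennreal_ofReal

theorem rayleighDensity_eq_indicator : rayleighDensity lam =
    (Ioi 0).indicator fun x => ENNReal.ofReal (2 * π * lam * x * exp (-(π * lam * x ^ 2))) := by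
  ext x
  by_cases hx : 0 < x <;> simp [rayleighDensity, hx]

theorem integral_mul_exp_neg_mul_sq_Ioi {b : ℝ} (hb : 0 < b) :
    ∫ x in Ioi 0, x * exp (-b * x ^ 2) = (2 * b)⁻¹ := by
  have := integral_rpow_mul_exp_neg_mul_rpow (p := 2) (q := 1) two_pos (by norm_num) hb
  norm_num [Real.rpow_two, Real.rpow_neg_one] at this
  simp only [neg_mul]
  rw [this, mul_inv]
  ring

theorem lintegral_rayleighDensity (hlam : 0 < lam) : ∫⁻ x, rayleighDensity lam x = 1 := by
  have hb : 0 < π * lam := by positivity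
  have hform : ∀ x, 2 * π * lam * x * exp (-(π * lam * x ^ 2)) =
      2 * (π * lam) * (x * exp (-(π * lam) * x ^ 2)) := fun x => by ring_nf
  simp_rw [rayleighDensity_eq_indicator, lintegral_indicator measurableSet_Ioi, hform]
  rw [← ofReal_integral_eq_lintegral_ofReal
      ((integrable_mul_exp_neg_mul_sq hb).integrableOn.const_mul _)
      ((ae_restrict_mem measurableSet_Ioi).mono fun x (hx : 0 < x) => by positivity),
    integral_const_mul, integral_mul_exp_neg_mul_sq_Ioi hb, mul_inv_cancel₀ (by positivity),
    ENNReal.ofReal_one]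

theorem rayleighDensity_mul_inv_mul_rayleighDensity_div {lamB lamR x z : ℝ} (hB : 0 < lamB)
    (hR : 0 < lamR) (hx : 0 < x) (hz : 0 < z) :
    rayleighDensity lamB x * ENNReal.ofReal |x|⁻¹ * rayleighDensity lamR (z / x) =
      ENNReal.ofReal (4 * π ^ 2 * z * lamB * lamR) * (ENNReal.ofReal x⁻¹ *
        ENNReal.ofReal (exp (-(π * lamB * x ^ 2 + π * lamR * z ^ 2 / x ^ 2)))) := by
  rw [rayleighDensity_of_pos hx, rayleighDensity_of_pos (div_pos hz hx), abs_of_pos hx,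
    ← ENNReal.ofReal_mul (by positivity), ← ENNReal.ofReal_mul (by positivity),
    ← ENNReal.ofReal_mul (by positivity), ← ENNReal.ofReal_mul (by positivity),
    neg_add, exp_add]
  congr 1
  field_simp
  ring

theorem mellinConv_rayleighDensity {lamB lamR : ℝ} (hB : 0 < lamB) (hR : 0 < lamR) (z : ℝ) :
    mellinConv (rayleighDensity lamB) (rayleighDensity lamR) z = ENNReal.ofReal
      (if 0 < z then 4 * π ^ 2 * z * lamB * lamR * besselK0 (2 * π * z * √(lamB * lamR))
       else 0) := by
  rw [mellinConv]
  split_ifs with hz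
  · have hpt : ∀ x,
        rayleighDensity lamB x * ENNReal.ofReal |x|⁻¹ * rayleighDensity lamR (z / x) =
          (Ioi 0).indicator (fun x => ENNReal.ofReal (4 * π ^ 2 * z * lamB * lamR) *
            (ENNReal.ofReal x⁻¹ *
              ENNReal.ofReal (exp (-(π * lamB * x ^ 2 + π * lamR * z ^ 2 / x ^ 2))))) x := by
      intro x
      rcases le_or_gt x 0 with hx | hx
      · rw [rayleighDensity_of_nonpos hx, indicator_of_notMem (notMem_Ioi.mpr hx), zero_mul,
          zero_mul]
      · rw [indicator_of_mem (mem_Ioi.mpr hx),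
          rayleighDensity_mul_inv_mul_rayleighDensity_div hB hR hx hz]
    rw [lintegral_congr hpt, lintegral_indicator measurableSet_Ioi,
      lintegral_const_mul' _ _ ofReal_ne_top,
      lintegral_inv_mul_exp_neg_mul_sq_add_div_sq (by positivity) (by positivity),
      ← ENNReal.ofReal_mul (by positivity),
      show π * lamB * (π * lamR * z ^ 2) = (π * z) ^ 2 * (lamB * lamR) by ring,
      sqrt_mul (sq_nonneg _), sqrt_sq (by positivity)]
    ring_nf
  · have hzero : ∀ x,
        rayleighDensity lamB x * ENNReal.ofReal |x|⁻¹ * rayleighDensity lamR (z / x) = 0 := by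
      intro x
      rcases le_or_gt x 0 with hx | hx
      · rw [rayleighDensity_of_nonpos hx, zero_mul, zero_mul]
      · rw [rayleighDensity_of_nonpos (div_nonpos_of_nonpos_of_nonneg (not_lt.mp hz) hx.le),
          mul_zero]
    rw [lintegral_congr hzero, lintegral_zero, ENNReal.ofReal_zero]

end Rayleigh

/-- The product `Z = X·Y` of independent Rayleigh-type random variables with PDFs
`f_X(x) = 2π λ_B x exp(−π λ_B x²)` and `f_Y(y) = 2π λ_R y exp(−π λ_R y²)` has PDF
`f_Z(z) = 4π² z λ_B λ_R K₀(2π z √(λ_B λ_R))`. -/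
theorem pdf_product_rayleigh
    {Ω : Type*} [MeasureSpace Ω] [IsProbabilityMeasure (ℙ : Measure Ω)]
    (lamB lamR : ℝ) (hB : 0 < lamB) (hR : 0 < lamR)
    (X Y : Ω → ℝ) (hX : Measurable X) (hY : Measurable Y)
    (hind : IndepFun X Y ℙ)
    (hpdfX : pdf X ℙ volume =ᵐ[volume] fun x =>
      ENNReal.ofReal (if 0 < x then 2 * π * lamB * x * Real.exp (-(π * lamB * x ^ 2)) else 0))
    (hpdfY : pdf Y ℙ volume =ᵐ[volume] fun y =>
      ENNReal.ofReal (if 0 < y then 2 * π * lamR * y * Real.exp (-(π * lamR * y ^ 2)) else 0)) :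
    pdf (fun ω => X ω * Y ω) ℙ volume =ᵐ[volume] fun z =>
      ENNReal.ofReal
        (if 0 < z then 4 * π ^ 2 * z * lamB * lamR * besselK0 (2 * π * z * Real.sqrt (lamB * lamR))
         else 0) := by
  have hlawX :=
    map_eq_withDensity_of_pdf_ae_eq hX.aemeasurable hpdfX (lintegral_rayleighDensity hB)
  have hlawY :=
    map_eq_withDensity_of_pdf_ae_eq hY.aemeasurable hpdfY (lintegral_rayleighDensity hR)
  exact (hind.pdf_mul_ae_eq_mellinConv hX hY measurable_rayleighDensity measurable_rayleighDensity
    hlawX hlawY).trans (ae_of_all _ (mellinConv_rayleighDensity hB hR))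
end

section
/- Let λ̃ = λ_R/λ_B > 0 and c > 0 with c⁴ > 4λ̃. Then 4π² λ_B λ_R ∫_0^∞ x (1 − exp(−π λ_B c² x)) K_0(2π x √(λ_B λ_R)) dx = 1 − (4λ̃/(c⁴ − 4λ̃)) · ( (c²/√(c⁴ − 4λ̃)) · ln( c²/(2√λ̃) + √(c⁴/(4λ̃) − 1) ) − 1 ). -/
/-!
Write `a = 2π√(λ_B λ_R)` and `b = π λ_B c²`, so that the integrand is
`x (1 - e^{-bx}) K₀(ax)` and `b / a = c² / (2√λ̃) > 1`. Inserting `K₀(ax) = ∫₀^∞ e^{-ax cosh t} dt`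
and integrating in `x` first (Tonelli) gives the Laplace transform
`∫₀^∞ x e^{-sx} K₀(ax) dx = ∫₀^∞ (s + a cosh t)⁻² dt`. For `s = 0` this is `1 / a²`, and for
`s = b` the integral `∫₀^∞ (r + cosh t)⁻² dt`, `r = b / a`, is elementary: it equals
`(r arcosh r / √(r² - 1) - 1) / (r² - 1)`, and `arcosh r = log (r + √(r² - 1))`.
-/

open Real MeasureTheory

open Set Filter Topology

lemma tendsto_add_cosh_atTop (r : ℝ) : Tendsto (fun t => r + cosh t) atTop atTop := by
  refine tendsto_atTop_add_const_left _ r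
    (tendsto_atTop_mono (fun t => ?_) (tendsto_exp_atTop.atTop_div_const two_pos))
  rw [cosh_eq]
  linarith [exp_pos (-t)]

lemma hasDerivAt_sinh_div_add_cosh {r : ℝ} (hr : -1 < r) (t : ℝ) :
    HasDerivAt (fun t => sinh t / (r + cosh t)) ((r * cosh t + 1) / (r + cosh t) ^ 2) t := by
  have hden : r + cosh t ≠ 0 := by linarith [one_le_cosh t]
  refine ((hasDerivAt_sinh t).div ((hasDerivAt_cosh t).const_add r) hden).congr_deriv ?_
  congr 1
  linear_combination cosh_sq_sub_sinh_sq t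

lemma tendsto_sinh_div_add_cosh_atTop (r : ℝ) :
    Tendsto (fun t => sinh t / (r + cosh t)) atTop (𝓝 1) := by
  have hlim : Tendsto (fun t => 1 - (r + exp (-t)) / (r + cosh t)) atTop (𝓝 (1 - 0)) :=
    tendsto_const_nhds.sub <| (tendsto_const_nhds.add tendsto_exp_neg_atTop_nhds_zero).div_atTop
      (tendsto_add_cosh_atTop r)
  rw [sub_zero] at hlim
  refine hlim.congr' ?_
  filter_upwards [(tendsto_add_cosh_atTop r).eventually_gt_atTop 0] with t ht
  rw [← cosh_sub_sinh]
  field_simp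
  ring

lemma hasDerivAt_sinh_div_cosh (t : ℝ) :
    HasDerivAt (fun t => sinh t / (0 + cosh t)) (cosh t ^ 2)⁻¹ t :=
  (hasDerivAt_sinh_div_add_cosh neg_one_lt_zero t).congr_deriv (by simp)

theorem integrableOn_inv_cosh_sq : IntegrableOn (fun t => (cosh t ^ 2)⁻¹) (Ioi 0) :=
  integrableOn_Ioi_deriv_of_nonneg' (fun t _ => hasDerivAt_sinh_div_cosh t)
    (fun t _ => by positivity) (tendsto_sinh_div_add_cosh_atTop 0)

theorem integral_inv_cosh_sq : ∫ t in Ioi 0, (cosh t ^ 2)⁻¹ = 1 := by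
  simpa using integral_Ioi_of_hasDerivAt_of_nonneg' (a := 0)
    (fun t _ => hasDerivAt_sinh_div_cosh t) (fun t _ => by positivity)
    (tendsto_sinh_div_add_cosh_atTop 0)

/-- A primitive of `t ↦ (r + cosh t)⁻¹` for `r > 1`: the substitution `u = eᵗ` turns the integrand
into `2 / ((u + r)² - (r² - 1))`, which splits into partial fractions. -/
noncomputable def primitiveInvAddCosh (r t : ℝ) : ℝ :=
  (log (exp t + r - √(r ^ 2 - 1)) - log (exp t + r + √(r ^ 2 - 1))) / √(r ^ 2 - 1)

section AddCosh

variable {r : ℝ} (hr : 1 < r)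
include hr

lemma sqrt_sq_sub_one_lt : √(r ^ 2 - 1) < r :=
  (sqrt_lt' (by linarith)).2 (by linarith)

lemma hasDerivAt_primitiveInvAddCosh (t : ℝ) :
    HasDerivAt (primitiveInvAddCosh r) (r + cosh t)⁻¹ t := by
  have hq2 : √(r ^ 2 - 1) ^ 2 = r ^ 2 - 1 := sq_sqrt (by nlinarith)
  have hq : 0 < √(r ^ 2 - 1) := sqrt_pos.2 (by nlinarith)
  have hminus : exp t + r - √(r ^ 2 - 1) ≠ 0 := by
    linarith [exp_pos t, sqrt_sq_sub_one_lt hr]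
  have hplus : exp t + r + √(r ^ 2 - 1) ≠ 0 := by linarith [exp_pos t]
  have hcosh : r + cosh t ≠ 0 := by linarith [one_le_cosh t]
  have hlin := (hasDerivAt_exp t).add_const r
  refine ((((hlin.sub_const _).log hminus).sub ((hlin.add_const _).log hplus)).div_const
    _).congr_deriv ?_
  rw [cosh_eq, exp_neg]
  field_simp
  linear_combination 2 * √(r ^ 2 - 1) * hq2

lemma tendsto_primitiveInvAddCosh_atTop :
    Tendsto (primitiveInvAddCosh r) atTop (𝓝 0) := by
  set q := √(r ^ 2 - 1)
  have hqr : q < r := sqrt_sq_sub_one_lt hr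
  have hden : Tendsto (fun t => exp t + r + q) atTop atTop :=
    tendsto_atTop_add_const_right _ _ (tendsto_atTop_add_const_right _ _ tendsto_exp_atTop)
  have hratio : Tendsto (fun t => 1 - 2 * q / (exp t + r + q)) atTop (𝓝 1) := by
    simpa using tendsto_const_nhds.sub (hden.const_div_atTop (2 * q))
  have hlog := ((continuousAt_log one_ne_zero).tendsto.comp hratio).div_const q
  rw [log_one, zero_div] at hlog
  refine hlog.congr' ?_
  filter_upwards [hden.eventually_gt_atTop 0] with t ht
  have hminus : 0 < exp t + r - q := by linarith [exp_pos t]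
  rw [primitiveInvAddCosh, Function.comp_apply, ← log_div hminus.ne' ht.ne']
  congr 2
  field_simp
  ring

lemma primitiveInvAddCosh_zero :
    primitiveInvAddCosh r 0 = -(arcosh r / √(r ^ 2 - 1)) := by
  have hq2 : √(r ^ 2 - 1) ^ 2 = r ^ 2 - 1 := sq_sqrt (by nlinarith)
  have hplus : 0 < 1 + r + √(r ^ 2 - 1) := by linarith [sqrt_nonneg (r ^ 2 - 1)]
  rw [primitiveInvAddCosh, exp_zero, ← log_div (by linarith [sqrt_sq_sub_one_lt hr]) hplus.ne',
    arcosh, ← neg_div, ← log_inv, add_sqrt_self_sq_sub_one_inv hr.le]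
  congr 2
  field_simp
  linear_combination hq2

-- `(r² - 1) / (r + cosh t)² = r / (r + cosh t) - (d/dt) (sinh t / (r + cosh t))`.
theorem integral_inv_add_cosh_sq :
    ∫ t in Ioi 0, ((r + cosh t) ^ 2)⁻¹ = (r ^ 2 - 1)⁻¹ * (r / √(r ^ 2 - 1) * arcosh r - 1) := by
  have hr2 : r ^ 2 - 1 ≠ 0 := by nlinarith
  have hderiv : ∀ t ∈ Ici (0 : ℝ), HasDerivAt
      (fun t => (r * primitiveInvAddCosh r t - sinh t / (r + cosh t)) / (r ^ 2 - 1))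
      ((r + cosh t) ^ 2)⁻¹ t := by
    intro t _
    have hcosh : r + cosh t ≠ 0 := by linarith [one_le_cosh t]
    refine ((((hasDerivAt_primitiveInvAddCosh hr t).const_mul r).sub
      (hasDerivAt_sinh_div_add_cosh (by linarith) t)).div_const _).congr_deriv ?_
    field_simp
    ring
  have hlim : Tendsto (fun t => (r * primitiveInvAddCosh r t - sinh t / (r + cosh t)) / (r ^ 2 - 1))
      atTop (𝓝 ((r * 0 - 1) / (r ^ 2 - 1))) :=
    (((tendsto_primitiveInvAddCosh_atTop hr).const_mul r).sub
      (tendsto_sinh_div_add_cosh_atTop r)).div_const _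
  rw [integral_Ioi_of_hasDerivAt_of_nonneg' hderiv (fun t _ => by positivity) hlim,
    primitiveInvAddCosh_zero hr, sinh_zero, zero_div, sub_zero]
  ring

end AddCosh

theorem integrableOn_mul_exp_neg_mul {s : ℝ} (hs : 0 < s) :
    IntegrableOn (fun x => x * exp (-(s * x))) (Ioi 0) := by
  simpa [neg_mul] using integrableOn_rpow_mul_exp_neg_mul_rpow (s := 1) (p := 1) (by norm_num)
    one_pos hs

theorem integral_mul_exp_neg_mul {s : ℝ} (hs : 0 < s) :
    ∫ x in Ioi 0, x * exp (-(s * x)) = (s ^ 2)⁻¹ := by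
  have := integral_rpow_mul_exp_neg_mul_Ioi two_pos hs
  norm_num at this
  simpa using this

lemma mul_exp_neg_mul_exp_cosh (a s x t : ℝ) :
    x * exp (-(s * x)) * exp (-(a * x * cosh t)) = x * exp (-((s + a * cosh t) * x)) := by
  rw [mul_assoc, ← exp_add]
  ring_nf

lemma mul_exp_neg_mul_besselK0 (a s x : ℝ) : x * exp (-(s * x)) * besselK0 (a * x) =
    ∫ t in Ioi 0, x * exp (-(s * x)) * exp (-(a * x * cosh t)) := by
  rw [besselK0, ← integral_const_mul]

section LaplaceBesselK0

variable {a s : ℝ} (ha : 0 < a) (hs : 0 ≤ s)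
include ha hs

lemma add_mul_cosh_pos (t : ℝ) : 0 < s + a * cosh t := by
  nlinarith [one_le_cosh t]

lemma integral_mul_exp_neg_mul_exp_cosh (t : ℝ) :
    ∫ x in Ioi 0, x * exp (-(s * x)) * exp (-(a * x * cosh t)) = ((s + a * cosh t) ^ 2)⁻¹ := by
  simp_rw [mul_exp_neg_mul_exp_cosh]
  exact integral_mul_exp_neg_mul (add_mul_cosh_pos ha hs t)

lemma integrableOn_inv_add_mul_cosh_sq :
    IntegrableOn (fun t => ((s + a * cosh t) ^ 2)⁻¹) (Ioi 0) := by
  refine (integrableOn_inv_cosh_sq.const_mul (a ^ 2)⁻¹).mono' (by fun_prop) ?_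
  refine ae_of_all _ fun t => ?_
  have hcosh := cosh_pos t
  rw [norm_of_nonneg (by positivity), ← mul_inv, ← mul_pow]
  gcongr
  linarith

theorem integrable_mul_exp_neg_mul_exp_cosh :
    Integrable (fun p : ℝ × ℝ => p.1 * exp (-(s * p.1)) * exp (-(a * p.1 * cosh p.2)))
      ((volume.restrict (Ioi 0)).prod (volume.restrict (Ioi 0))) := by
  have hcont : Continuous
      (fun p : ℝ × ℝ => p.1 * exp (-(s * p.1)) * exp (-(a * p.1 * cosh p.2))) := by
    fun_prop
  refine (integrable_prod_iff' hcont.aestronglyMeasurable).2 ⟨ae_of_all _ fun t => ?_, ?_⟩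
  · simp_rw [mul_exp_neg_mul_exp_cosh]
    exact integrableOn_mul_exp_neg_mul (add_mul_cosh_pos ha hs t)
  · refine (integrableOn_inv_add_mul_cosh_sq ha hs).congr (ae_of_all _ fun t => ?_)
    dsimp only
    rw [← integral_mul_exp_neg_mul_exp_cosh ha hs t]
    refine setIntegral_congr_fun measurableSet_Ioi fun x (hx : 0 < x) => ?_
    rw [norm_of_nonneg (by positivity)]

theorem integrableOn_mul_exp_neg_mul_besselK0 :
    IntegrableOn (fun x => x * exp (-(s * x)) * besselK0 (a * x)) (Ioi 0) := by
  simp_rw [mul_exp_neg_mul_besselK0]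
  exact (integrable_mul_exp_neg_mul_exp_cosh ha hs).integral_prod_left

theorem integral_mul_exp_neg_mul_besselK0 :
    ∫ x in Ioi 0, x * exp (-(s * x)) * besselK0 (a * x) =
      ∫ t in Ioi 0, ((s + a * cosh t) ^ 2)⁻¹ := by
  simp_rw [mul_exp_neg_mul_besselK0]
  rw [integral_integral_swap (f := fun x t => x * exp (-(s * x)) * exp (-(a * x * cosh t)))
    (integrable_mul_exp_neg_mul_exp_cosh ha hs)]
  simp_rw [integral_mul_exp_neg_mul_exp_cosh ha hs]

end LaplaceBesselK0

lemma integral_inv_add_mul_cosh_sq {a : ℝ} (ha : a ≠ 0) (s : ℝ) :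
    ∫ t in Ioi 0, ((s + a * cosh t) ^ 2)⁻¹ =
      (a ^ 2)⁻¹ * ∫ t in Ioi 0, ((s / a + cosh t) ^ 2)⁻¹ := by
  rw [← integral_const_mul]
  congr 1 with t
  field_simp

/-- `A_L` as a function of `r = c² / (2√λ̃)`. -/
noncomputable def associationProbabilityHalf (r : ℝ) : ℝ :=
  1 - (r ^ 2 - 1)⁻¹ * (r / √(r ^ 2 - 1) * arcosh r - 1)

theorem integral_mul_one_sub_exp_mul_besselK0 {a b : ℝ} (ha : 0 < a) (hab : a < b) :
    a ^ 2 * ∫ x in Ioi 0, x * (1 - exp (-(b * x))) * besselK0 (a * x) =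
      associationProbabilityHalf (b / a) := by
  have hb : 0 ≤ b := (ha.trans hab).le
  have hsplit : ∫ x in Ioi 0, x * (1 - exp (-(b * x))) * besselK0 (a * x) =
      (∫ x in Ioi 0, x * exp (-(0 * x)) * besselK0 (a * x)) -
        ∫ x in Ioi 0, x * exp (-(b * x)) * besselK0 (a * x) := by
    rw [← integral_sub (integrableOn_mul_exp_neg_mul_besselK0 ha le_rfl)
      (integrableOn_mul_exp_neg_mul_besselK0 ha hb)]
    congr 1 with x
    simp only [zero_mul, neg_zero, exp_zero]
    ring
  rw [hsplit, integral_mul_exp_neg_mul_besselK0 ha le_rfl, integral_mul_exp_neg_mul_besselK0 ha hb,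
    integral_inv_add_mul_cosh_sq ha.ne', integral_inv_add_mul_cosh_sq ha.ne', zero_div]
  simp only [zero_add, integral_inv_cosh_sq,
    integral_inv_add_cosh_sq ((one_lt_div ha).2 hab), associationProbabilityHalf]
  field_simp

section Ratio

variable {ρ c : ℝ} (hρ : 0 < ρ)
include hρ

lemma sq_div_two_mul_sqrt_sq : (c ^ 2 / (2 * √ρ)) ^ 2 = c ^ 4 / (4 * ρ) := by
  rw [div_pow, mul_pow, sq_sqrt hρ.le]
  ring

lemma one_lt_sq_div_two_mul_sqrt (hlt : 4 * ρ < c ^ 4) : 1 < c ^ 2 / (2 * √ρ) := by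
  have hc : 0 < c ^ 2 := by
    have : c ≠ 0 := by rintro rfl; linarith
    positivity
  have : 1 < (c ^ 2 / (2 * √ρ)) ^ 2 := by
    rw [sq_div_two_mul_sqrt_sq hρ, one_lt_div (by positivity)]
    exact hlt
  nlinarith [show 0 < c ^ 2 / (2 * √ρ) by positivity]

lemma associationProbabilityHalf_sq_div_two_mul_sqrt :
    associationProbabilityHalf (c ^ 2 / (2 * √ρ)) =
      1 - (4 * ρ / (c ^ 4 - 4 * ρ)) * ((c ^ 2 / √(c ^ 4 - 4 * ρ)) *
        log (c ^ 2 / (2 * √ρ) + √(c ^ 4 / (4 * ρ) - 1)) - 1) := by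
  have hsub : (c ^ 2 / (2 * √ρ)) ^ 2 - 1 = (c ^ 4 - 4 * ρ) / (4 * ρ) := by
    rw [sq_div_two_mul_sqrt_sq hρ]
    field_simp
  have hsqrt : √((c ^ 2 / (2 * √ρ)) ^ 2 - 1) = √(c ^ 4 - 4 * ρ) / (2 * √ρ) := by
    rw [hsub, sqrt_div' _ (by positivity), sqrt_mul' _ hρ.le,
      show (4 : ℝ) = 2 ^ 2 by norm_num, sqrt_sq zero_le_two]
  rw [associationProbabilityHalf, hsqrt, arcosh, sq_div_two_mul_sqrt_sq hρ]
  field_simp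

end Ratio

theorem association_probability_closed_form_half_general (lamB lamR c : ℝ)
    (hB : 0 < lamB) (hR : 0 < lamR)
    (hlt : 4 * (lamR / lamB) < c ^ 4) :
    4 * π ^ 2 * lamB * lamR *
      ∫ x in Set.Ioi (0:ℝ),
        x * (1 - Real.exp (-(π * lamB * c ^ 2 * x))) *
          besselK0 (2 * π * x * Real.sqrt (lamB * lamR)) =
    1 - (4 * (lamR / lamB) / (c ^ 4 - 4 * (lamR / lamB))) *
      ((c ^ 2 / Real.sqrt (c ^ 4 - 4 * (lamR / lamB))) *
        Real.log (c ^ 2 / (2 * Real.sqrt (lamR / lamB)) +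
          Real.sqrt (c ^ 4 / (4 * (lamR / lamB)) - 1)) - 1) := by
  have hρ : 0 < lamR / lamB := div_pos hR hB
  have ha : 0 < 2 * π * √(lamB * lamR) := by positivity
  have hcoef : (2 * π * √(lamB * lamR)) ^ 2 = 4 * π ^ 2 * lamB * lamR := by
    rw [mul_pow, sq_sqrt (by positivity)]
    ring
  have hratio : π * lamB * c ^ 2 / (2 * π * √(lamB * lamR)) = c ^ 2 / (2 * √(lamR / lamB)) := by
    rw [show lamB * lamR = lamB ^ 2 * (lamR / lamB) by field_simp, sqrt_mul (sq_nonneg _),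
      sqrt_sq hB.le]
    field_simp
  have hab : 2 * π * √(lamB * lamR) < π * lamB * c ^ 2 :=
    (one_lt_div ha).1 (hratio ▸ one_lt_sq_div_two_mul_sqrt hρ hlt)
  simp_rw [show ∀ x, 2 * π * x * √(lamB * lamR) = 2 * π * √(lamB * lamR) * x from
    fun x => by ring]
  rw [← hcoef, integral_mul_one_sub_exp_mul_besselK0 ha hab, hratio,
    associationProbabilityHalf_sq_div_two_mul_sqrt hρ]

/-- Closed form of the LoS association probability in the special case `p_L ≡ 1`,
`α_L = 2 α_R`, where `λ̃ = λ_R/λ_B` and `c⁴ > 4λ̃`. -/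
theorem association_probability_closed_form_half (lamB lamR c : ℝ)
    (hB : 0 < lamB) (hR : 0 < lamR) (hc : 0 < c)
    (hlt : 4 * (lamR / lamB) < c ^ 4) :
    4 * π ^ 2 * lamB * lamR *
      ∫ x in Set.Ioi (0:ℝ),
        x * (1 - Real.exp (-(π * lamB * c ^ 2 * x))) *
          besselK0 (2 * π * x * Real.sqrt (lamB * lamR)) =
    1 - (4 * (lamR / lamB) / (c ^ 4 - 4 * (lamR / lamB))) *
      ((c ^ 2 / Real.sqrt (c ^ 4 - 4 * (lamR / lamB))) *
        Real.log (c ^ 2 / (2 * Real.sqrt (lamR / lamB)) +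
          Real.sqrt (c ^ 4 / (4 * (lamR / lamB)) - 1)) - 1) :=
  association_probability_closed_form_half_general lamB lamR c hB hR hlt
end

section
/- Let h² be a Gamma random variable with shape m ∈ ℕ₊ and rate m (i.e., normalized Gamma with mean 1). Then for all x ≥ 0, P(h² < x) ≥ (1 − e^{−ηx})^m, where η = m (m!)^{−1/m}. Consequently P(h² > x) ≤ Σ_{n=1}^{m} (−1)^{n+1} C(m,n) e^{−nηx}. -/
/-!
With `l = (m!)^{-1/m}` (so `η = m l`), the substitution `s = m x` turns the claim into
`(1 - e^{-l s})^m ≤ P(m, s)`, where `P(m, ·)` is the Erlang (unit-rate Gamma) CDF. Both sides vanish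
at `0` and tend to `1` at `∞`, so it suffices that the derivative of the difference changes sign at
most once, from `-` to `+`. That sign is the sign of the logarithm `g` of the ratio of the two
densities; `g` is convex on `(0, ∞)` (which reduces to `u/2 ≤ sinh (u/2)`) and tends to `0` at `0⁺`
precisely because `l^m m! = 1`, so once `g` is nonnegative it stays nonnegative.
-/

open Real MeasureTheory ProbabilityTheory
open Filter Function Set Topology
open scoped Nat

theorem ConvexOn.nonneg_of_map_zero_of_le {f : ℝ → ℝ} (hf : ConvexOn ℝ (Ici 0) f) (h0 : f 0 = 0)
    {a b : ℝ} (ha : 0 < a) (hab : a ≤ b) (hfa : 0 ≤ f a) : 0 ≤ f b := by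
  have hb : 0 < b := ha.trans_le hab
  have hslope := hf.secant_mono (a := 0) self_mem_Ici ha.le hb.le ha.ne' hb.ne' hab
  simp only [h0, sub_zero] at hslope
  simpa using (le_div_iff₀ hb).mp ((div_nonneg hfa ha.le).trans hslope)

theorem nonpos_of_hasDerivAt_of_single_crossing {f f' : ℝ → ℝ}
    (hf : ∀ t, HasDerivAt f (f' t) t) (h0 : f 0 = 0) (htop : Tendsto f atTop (𝓝 0))
    (hcross : ∀ a b, 0 < a → a ≤ b → 0 < f' a → 0 ≤ f' b) {s : ℝ} (hs : 0 ≤ s) :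
    f s ≤ 0 := by
  have hderivWithin : ∀ (D : Set ℝ) (x : ℝ), HasDerivWithinAt f (f' x) D x :=
    fun D x => (hf x).hasDerivWithinAt
  have hcont : Continuous f := continuous_iff_continuousAt.mpr fun t => (hf t).continuousAt
  by_cases hpos : ∃ a ∈ Ioc 0 s, 0 < f' a
  · obtain ⟨a, ⟨ha, has⟩, hfa⟩ := hpos
    have hmono : MonotoneOn f (Ici s) :=
      monotoneOn_of_hasDerivWithinAt_nonneg (convex_Ici s) hcont.continuousOn
        (fun x _ => hderivWithin _ x) fun x hx =>
          hcross a x ha (has.trans (interior_subset hx)) hfa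
    exact ge_of_tendsto htop <| (eventually_ge_atTop s).mono fun t hst =>
      hmono self_mem_Ici hst hst
  · simp only [not_exists, not_and, not_lt] at hpos
    have hanti : AntitoneOn f (Icc 0 s) :=
      antitoneOn_of_hasDerivWithinAt_nonpos (convex_Icc 0 s) hcont.continuousOn
        (fun x _ => hderivWithin _ x) fun x hx => by
          rw [interior_Icc] at hx
          exact hpos x ⟨hx.1, hx.2.le⟩
    simpa [h0] using hanti (left_mem_Icc.mpr hs) (right_mem_Icc.mpr hs) hs

theorem one_sub_one_sub_pow {R : Type*} [CommRing R] (a : R) (m : ℕ) :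
    1 - (1 - a) ^ m = ∑ n ∈ Finset.Icc 1 m, (-1) ^ (n + 1) * (m.choose n : R) * a ^ n := by
  rw [show 1 - a = -a + 1 by ring, add_pow, Finset.range_eq_Ico,
    Finset.sum_eq_sum_Ico_succ_bot m.succ_pos, Nat.succ_eq_add_one, zero_add,
    Finset.Ico_add_one_right_eq_Icc, pow_zero,
    one_mul, one_pow, Nat.choose_zero_right, Nat.cast_one, one_mul, sub_add_cancel_left,
    ← Finset.sum_neg_distrib]
  refine Finset.sum_congr rfl fun n _ => ?_
  rw [one_pow, neg_pow]
  ring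

theorem rpow_neg_one_div_pow_mul_self {x : ℝ} (hx : 0 < x) {m : ℕ} (hm : m ≠ 0) :
    (x ^ (-(1 / (m : ℝ)))) ^ m * x = 1 := by
  rw [rpow_neg hx.le, inv_pow, one_div, rpow_inv_natCast_pow hx.le hm, inv_mul_cancel₀ hx.ne']

theorem measure_Ioi_toReal_eq_one_sub {μ : Measure ℝ} [IsProbabilityMeasure μ] {x : ℝ}
    (hx : μ {x} = 0) : (μ (Ioi x)).toReal = 1 - (μ (Iio x)).toReal := by
  rw [← compl_Iic, prob_compl_eq_one_sub measurableSet_Iic, measure_congr (Iio_ae_eq_Iic' hx),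
    ENNReal.toReal_sub_of_le prob_le_one ENNReal.one_ne_top, ENNReal.toReal_one]

namespace GammaCDFBound

noncomputable def erlangCDF (m : ℕ) (s : ℝ) : ℝ :=
  1 - exp (-s) * ∑ k ∈ Finset.range m, s ^ k / k !

noncomputable def erlangPDF (m : ℕ) (s : ℝ) : ℝ :=
  s ^ (m - 1) * exp (-s) / (m - 1)!

theorem hasDerivAt_erlangCDF {m : ℕ} (hm : 0 < m) (s : ℝ) :
    HasDerivAt (erlangCDF m) (erlangPDF m s) s := by
  obtain ⟨n, rfl⟩ := Nat.exists_eq_succ_of_ne_zero hm.ne'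
  have hsum : HasDerivAt (fun s : ℝ => ∑ k ∈ Finset.range (n + 1), s ^ k / k !)
      (∑ k ∈ Finset.range n, s ^ k / k !) s := by
    refine (HasDerivAt.fun_sum fun k _ => (hasDerivAt_pow k s).div_const (k ! : ℝ)).congr_deriv ?_
    rw [Finset.sum_range_succ']
    simp only [Nat.cast_zero, zero_mul, zero_div, add_zero]
    refine Finset.sum_congr rfl fun k _ => ?_
    rw [Nat.factorial_succ, Nat.add_sub_cancel]
    push_cast
    field_simp
  have hexp : HasDerivAt (fun s : ℝ => exp (-s)) (-exp (-s)) s := by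
    simpa using (hasDerivAt_neg s).exp
  refine ((hexp.mul hsum).const_sub 1).congr_deriv ?_
  rw [erlangPDF, Finset.sum_range_succ, Nat.succ_sub_one]
  ring

theorem erlangCDF_zero {m : ℕ} (hm : 0 < m) : erlangCDF m 0 = 0 := by
  obtain ⟨n, rfl⟩ := Nat.exists_eq_succ_of_ne_zero hm.ne'
  simp [erlangCDF, Finset.sum_range_succ']

theorem tendsto_erlangCDF_atTop (m : ℕ) : Tendsto (erlangCDF m) atTop (𝓝 1) := by
  have hterm (k : ℕ) : Tendsto (fun s : ℝ => s ^ k * exp (-s) / k !) atTop (𝓝 0) := by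
    simpa using (tendsto_pow_mul_exp_neg_atTop_nhds_zero k).div_const (k ! : ℝ)
  have hsum := (tendsto_finsetSum (Finset.range m) fun k _ => hterm k).const_sub (1 : ℝ)
  rw [Finset.sum_const_zero, sub_zero] at hsum
  refine hsum.congr fun s => ?_
  rw [erlangCDF, Finset.mul_sum]
  congr 1
  refine Finset.sum_congr rfl fun k _ => ?_
  ring

theorem erlangPDF_pos (m : ℕ) {s : ℝ} (hs : 0 < s) : 0 < erlangPDF m s := by
  unfold erlangPDF; positivity

theorem gammaPDFReal_natCast {m : ℕ} (hm : 0 < m) (r : ℝ) {t : ℝ} (ht : 0 ≤ t) :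
    gammaPDFReal m r t = r * erlangPDF m (r * t) := by
  obtain ⟨n, rfl⟩ := Nat.exists_eq_succ_of_ne_zero hm.ne'
  rw [gammaPDFReal, if_pos ht, Real.rpow_natCast, Nat.cast_succ, Real.Gamma_nat_eq_factorial,
    add_sub_cancel_right, Real.rpow_natCast, erlangPDF, Nat.succ_sub_one, mul_pow, pow_succ]
  ring

theorem gammaMeasure_singleton (a r x : ℝ) : gammaMeasure a r {x} = 0 :=
  withDensity_absolutelyContinuous _ _ Real.volume_singleton

theorem continuous_erlangPDF (m : ℕ) : Continuous (erlangPDF m) := by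
  unfold erlangPDF; fun_prop

theorem gammaMeasure_Iio_toReal {m : ℕ} (hm : 0 < m) {r : ℝ} (hr : 0 < r) {x : ℝ} (hx : 0 ≤ x) :
    (gammaMeasure m r (Iio x)).toReal = erlangCDF m (r * x) := by
  have : IsProbabilityMeasure (gammaMeasure m r) :=
    isProbabilityMeasure_gammaMeasure (Nat.cast_pos.mpr hm) hr
  have hderiv (t : ℝ) : HasDerivAt (fun t => erlangCDF m (r * t)) (r * erlangPDF m (r * t)) t := by
    have := (hasDerivAt_erlangCDF hm (r * t)).comp t ((hasDerivAt_id t).const_mul r)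
    rwa [mul_one, mul_comm] at this
  have hvanish : ∀ t ∈ Iic x \ Icc 0 x, gammaPDFReal m r t = 0 :=
    fun t ht => if_neg fun h => ht.2 ⟨h, ht.1⟩
  rw [measure_congr (Iio_ae_eq_Iic' (gammaMeasure_singleton _ _ x)), ← measureReal_def,
    ← cdf_eq_real,
    cdf_gammaMeasure_eq_integral (Nat.cast_pos.mpr hm) hr,
    setIntegral_eq_of_subset_of_forall_sdiff_eq_zero measurableSet_Iic Icc_subset_Iic_self hvanish,
    integral_Icc_eq_integral_Ioc, ← intervalIntegral.integral_of_le hx,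
    intervalIntegral.integral_congr fun t ht => gammaPDFReal_natCast hm r (by
      rw [uIcc_of_le hx] at ht; exact ht.1),
    intervalIntegral.integral_eq_sub_of_hasDerivAt (fun t _ => hderiv t)
      ((((continuous_erlangPDF m).comp (continuous_const_mul r)).const_mul r).intervalIntegrable
        _ _),
    mul_zero, erlangCDF_zero hm, sub_zero]

noncomputable def maxExpCDF (m : ℕ) (l s : ℝ) : ℝ := (1 - exp (-(l * s))) ^ m

noncomputable def maxExpPDF (m : ℕ) (l s : ℝ) : ℝ :=
  m * l * exp (-(l * s)) * (1 - exp (-(l * s))) ^ (m - 1)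

theorem hasDerivAt_one_sub_exp_neg_mul (l s : ℝ) :
    HasDerivAt (fun s => 1 - exp (-(l * s))) (l * exp (-(l * s))) s := by
  have := (((hasDerivAt_id s).const_mul l).neg.exp).const_sub 1
  simpa [mul_comm] using this

theorem one_sub_exp_neg_mul_pos {l s : ℝ} (hl : 0 < l) (hs : 0 < s) : 0 < 1 - exp (-(l * s)) := by
  simpa using mul_pos hl hs

theorem hasDerivAt_maxExpCDF (m : ℕ) (l s : ℝ) :
    HasDerivAt (maxExpCDF m l) (maxExpPDF m l s) s :=
  ((hasDerivAt_one_sub_exp_neg_mul l s).fun_pow m).congr_deriv (by unfold maxExpPDF; ring)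

theorem maxExpCDF_zero {m : ℕ} (hm : 0 < m) (l : ℝ) : maxExpCDF m l 0 = 0 := by
  simp [maxExpCDF, hm.ne']

theorem tendsto_maxExpCDF_atTop (m : ℕ) {l : ℝ} (hl : 0 < l) :
    Tendsto (maxExpCDF m l) atTop (𝓝 1) := by
  unfold maxExpCDF
  have hexp : Tendsto (fun s => exp (-(l * s))) atTop (𝓝 0) :=
    tendsto_exp_neg_atTop_nhds_zero.comp (tendsto_id.const_mul_atTop hl)
  simpa using (hexp.const_sub 1).pow m

theorem maxExpPDF_pos {m : ℕ} (hm : 0 < m) {l s : ℝ} (hl : 0 < l) (hs : 0 < s) :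
    0 < maxExpPDF m l s := by
  have := one_sub_exp_neg_mul_pos hl hs
  unfold maxExpPDF; positivity

noncomputable def logPDFRatio (m : ℕ) (l s : ℝ) : ℝ :=
  log (m * l * (m - 1)!) + (1 - l) * s + ((m : ℝ) - 1) * (log (1 - exp (-(l * s))) - log s)

theorem logPDFRatio_eq {m : ℕ} (hm : 0 < m) {l s : ℝ} (hl : 0 < l) (hs : 0 < s) :
    logPDFRatio m l s = log (maxExpPDF m l s) - log (erlangPDF m s) := by
  have hexp := one_sub_exp_neg_mul_pos hl hs
  have hm' : (0 : ℝ) < m := Nat.cast_pos.mpr hm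
  rw [logPDFRatio, maxExpPDF, erlangPDF, log_div (by positivity) (by positivity),
    log_mul (by positivity) (by positivity), log_mul (by positivity) (by positivity),
    log_mul (by positivity) (by positivity), log_mul (by positivity) (by positivity),
    log_mul (by positivity) (by positivity), log_mul (by positivity) (by positivity),
    log_pow, log_pow, log_exp, log_exp, Nat.cast_pred hm]
  ring

theorem logPDFRatio_pos_iff {m : ℕ} (hm : 0 < m) {l s : ℝ} (hl : 0 < l) (hs : 0 < s) :
    0 < logPDFRatio m l s ↔ erlangPDF m s < maxExpPDF m l s := by
  rw [logPDFRatio_eq hm hl hs, sub_pos,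
    log_lt_log_iff (erlangPDF_pos m hs) (maxExpPDF_pos hm hl hs)]

theorem logPDFRatio_nonneg_iff {m : ℕ} (hm : 0 < m) {l s : ℝ} (hl : 0 < l) (hs : 0 < s) :
    0 ≤ logPDFRatio m l s ↔ erlangPDF m s ≤ maxExpPDF m l s := by
  rw [logPDFRatio_eq hm hl hs, sub_nonneg,
    log_le_log_iff (erlangPDF_pos m hs) (maxExpPDF_pos hm hl hs)]

theorem tendsto_log_one_sub_exp_neg_mul_sub_log {l : ℝ} (hl : 0 < l) :
    Tendsto (fun s => log (1 - exp (-(l * s))) - log s) (𝓝[>] 0) (𝓝 (log l)) := by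
  have hslope : Tendsto (fun s => (1 - exp (-(l * s))) / s) (𝓝[>] 0) (𝓝 l) := by
    simpa [div_eq_inv_mul] using (hasDerivAt_one_sub_exp_neg_mul l 0).tendsto_slope_zero_right
  refine ((continuousAt_log hl.ne').tendsto.comp hslope).congr' ?_
  filter_upwards [self_mem_nhdsWithin] with s (hs : 0 < s)
  exact log_div (one_sub_exp_neg_mul_pos hl hs).ne' hs.ne'

theorem tendsto_logPDFRatio_nhdsGT_zero {m : ℕ} (hm : 0 < m) {l : ℝ} (hl : 0 < l)
    (hlm : l ^ m * m ! = 1) : Tendsto (logPDFRatio m l) (𝓝[>] 0) (𝓝 0) := by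
  have hlim : log (m * l * (m - 1)!) + (1 - l) * 0 + ((m : ℝ) - 1) * log l = log (l ^ m * m !) := by
    rw [mul_zero, add_zero, ← Nat.cast_pred hm, ← log_pow,
      ← log_mul (by positivity) (by positivity)]
    obtain ⟨n, rfl⟩ := Nat.exists_eq_succ_of_ne_zero hm.ne'
    rw [Nat.succ_sub_one, Nat.factorial_succ, pow_succ]
    push_cast
    ring_nf
  have hlin : Tendsto (fun s : ℝ => (1 - l) * s) (𝓝[>] 0) (𝓝 ((1 - l) * 0)) :=
    (continuous_const_mul _).continuousWithinAt
  have hsum : Tendsto (logPDFRatio m l) (𝓝[>] 0)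
      (𝓝 (log (m * l * (m - 1)!) + (1 - l) * 0 + ((m : ℝ) - 1) * log l)) :=
    (tendsto_const_nhds.add hlin).add ((tendsto_log_one_sub_exp_neg_mul_sub_log hl).const_mul _)
  rwa [hlim, hlm, log_one] at hsum

theorem sq_mul_exp_neg_le_one_sub_exp_neg_sq {u : ℝ} (hu : 0 ≤ u) :
    u ^ 2 * exp (-u) ≤ (1 - exp (-u)) ^ 2 := by
  -- `1 - e^{-u} = 2 e^{-u/2} sinh (u/2)` and `u/2 ≤ sinh (u/2)`
  have hsinh : u / 2 ≤ sinh (u / 2) := self_le_sinh_iff.mpr (by positivity)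
  have hhalf : exp (-(u / 2)) * exp (u / 2) = 1 := by rw [← exp_add]; simp
  have hsq : exp (-(u / 2)) ^ 2 = exp (-u) := by rw [← exp_nat_mul]; ring_nf
  have hkey : u * exp (-(u / 2)) ≤ 1 - exp (-u) := by
    rw [sinh_eq] at hsinh
    nlinarith [exp_pos (-(u / 2))]
  calc u ^ 2 * exp (-u) = (u * exp (-(u / 2))) ^ 2 := by rw [mul_pow, hsq]
    _ ≤ (1 - exp (-u)) ^ 2 := pow_le_pow_left₀ (by positivity) hkey 2

theorem hasDerivAt_logPDFRatio (m : ℕ) {l s : ℝ} (hl : 0 < l) (hs : 0 < s) :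
    HasDerivAt (logPDFRatio m l)
      ((1 - l) + ((m : ℝ) - 1) * (l * exp (-(l * s)) / (1 - exp (-(l * s))) - s⁻¹)) s := by
  have hlog := ((hasDerivAt_one_sub_exp_neg_mul l s).log
    (one_sub_exp_neg_mul_pos hl hs).ne').fun_sub (hasDerivAt_log hs.ne')
  refine (((hasDerivAt_const s (log (m * l * (m - 1)!))).add
    ((hasDerivAt_id s).const_mul (1 - l))).add (hlog.const_mul ((m : ℝ) - 1))).congr_deriv ?_
  ring

theorem hasDerivAt_logPDFRatio_deriv (m : ℕ) {l s : ℝ} (hl : 0 < l) (hs : 0 < s) :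
    HasDerivAt
      (fun s => (1 - l) + ((m : ℝ) - 1) * (l * exp (-(l * s)) / (1 - exp (-(l * s))) - s⁻¹))
      (((m : ℝ) - 1) * ((s ^ 2)⁻¹ - l ^ 2 * exp (-(l * s)) / (1 - exp (-(l * s))) ^ 2)) s := by
  have hexp := one_sub_exp_neg_mul_pos hl hs
  have hnum : HasDerivAt (fun s => l * exp (-(l * s))) (l * (-l * exp (-(l * s)))) s := by
    simpa using ((hasDerivAt_one_sub_exp_neg_mul l s).const_sub 1).const_mul l
  refine ((((hnum.div (hasDerivAt_one_sub_exp_neg_mul l s) hexp.ne').sub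
    (hasDerivAt_inv hs.ne')).const_mul ((m : ℝ) - 1)).const_add (1 - l)).congr_deriv ?_
  field_simp
  ring

theorem logPDFRatio_second_deriv_nonneg {m : ℕ} (hm : 0 < m) {l s : ℝ} (hl : 0 < l)
    (hs : 0 < s) :
    0 ≤ ((m : ℝ) - 1) * ((s ^ 2)⁻¹ - l ^ 2 * exp (-(l * s)) / (1 - exp (-(l * s))) ^ 2) := by
  have hexp := one_sub_exp_neg_mul_pos hl hs
  have hm1 : (0 : ℝ) ≤ m - 1 := sub_nonneg.mpr (Nat.one_le_cast.mpr hm)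
  have := sq_mul_exp_neg_le_one_sub_exp_neg_sq (mul_pos hl hs).le
  refine mul_nonneg hm1 ?_
  rw [sub_nonneg, div_le_iff₀ (by positivity), ← div_eq_inv_mul, le_div_iff₀ (by positivity)]
  linarith

theorem convexOn_update_logPDFRatio {m : ℕ} (hm : 0 < m) {l : ℝ} (hl : 0 < l)
    (hlm : l ^ m * m ! = 1) : ConvexOn ℝ (Ici 0) (update (logPDFRatio m l) 0 0) := by
  have hderiv {s : ℝ} (hs : 0 < s) := (hasDerivAt_logPDFRatio m hl hs).congr_of_eventuallyEq
    ((eventually_ne_nhds hs.ne').mono fun t ht => update_of_ne ht (0 : ℝ) (logPDFRatio m l))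
  have hcont : ContinuousOn (update (logPDFRatio m l) 0 0) (Ici 0) := by
    intro s hs
    rcases (mem_Ici.mp hs).eq_or_lt with rfl | hs
    · have hpunct : Ici (0 : ℝ) \ {0} = Ioi 0 := by ext; simp [lt_iff_le_and_ne, eq_comm]
      rw [continuousWithinAt_update_same, hpunct]
      exact tendsto_logPDFRatio_nhdsGT_zero hm hl hlm
    · exact (hderiv hs).continuousAt.continuousWithinAt
  have hint : ∀ s ∈ interior (Ici (0 : ℝ)), 0 < s := fun s hs => by rwa [interior_Ici] at hs
  exact convexOn_of_hasDerivWithinAt2_nonneg (convex_Ici 0) hcont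
    (fun s hs => (hderiv (hint s hs)).hasDerivWithinAt)
    (fun s hs => (hasDerivAt_logPDFRatio_deriv m hl (hint s hs)).hasDerivWithinAt)
    fun s hs => logPDFRatio_second_deriv_nonneg hm hl (hint s hs)

theorem logPDFRatio_nonneg_of_le {m : ℕ} (hm : 0 < m) {l : ℝ} (hl : 0 < l)
    (hlm : l ^ m * m ! = 1) {a b : ℝ} (ha : 0 < a) (hab : a ≤ b) (hga : 0 ≤ logPDFRatio m l a) :
    0 ≤ logPDFRatio m l b := by
  have h := (convexOn_update_logPDFRatio hm hl hlm).nonneg_of_map_zero_of_le (update_self ..) ha hab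
    (by rwa [update_of_ne ha.ne'])
  rwa [update_of_ne (ha.trans_le hab).ne'] at h

theorem maxExpCDF_le_erlangCDF {m : ℕ} (hm : 0 < m) {l : ℝ} (hl : 0 < l)
    (hlm : l ^ m * m ! = 1) {s : ℝ} (hs : 0 ≤ s) : maxExpCDF m l s ≤ erlangCDF m s := by
  refine sub_nonpos.mp <| nonpos_of_hasDerivAt_of_single_crossing
    (fun t => (hasDerivAt_maxExpCDF m l t).fun_sub (hasDerivAt_erlangCDF hm t))
    (by simp [maxExpCDF_zero hm, erlangCDF_zero hm])
    (by simpa using (tendsto_maxExpCDF_atTop m hl).sub (tendsto_erlangCDF_atTop m))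
    (fun a b ha hab hpos => ?_) hs
  have hb := ha.trans_le hab
  rw [sub_pos, ← logPDFRatio_pos_iff hm hl ha] at hpos
  rw [sub_nonneg, ← logPDFRatio_nonneg_iff hm hl hb]
  exact logPDFRatio_nonneg_of_le hm hl hlm ha hab hpos.le

theorem gammaMeasure_Ioi_toReal {m : ℕ} (hm : 0 < m) {r : ℝ} (hr : 0 < r) {x : ℝ} (hx : 0 ≤ x) :
    (gammaMeasure m r (Ioi x)).toReal = 1 - erlangCDF m (r * x) := by
  have : IsProbabilityMeasure (gammaMeasure m r) :=
    isProbabilityMeasure_gammaMeasure (Nat.cast_pos.mpr hm) hr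
  rw [measure_Ioi_toReal_eq_one_sub (gammaMeasure_singleton _ _ x),
    gammaMeasure_Iio_toReal hm hr hx]

end GammaCDFBound

open GammaCDFBound

/-- Alzer-type bound on the normalized Gamma distribution: if `h² ~ Gamma(m, m)` with
`m ∈ ℕ₊`, then `P(h² < x) ≥ (1 − e^{−ηx})^m` where `η = m (m!)^{−1/m}`; consequently
`P(h² > x) ≤ Σ_{n=1}^m (−1)^{n+1} C(m,n) e^{−nηx}`. -/
theorem gamma_cdf_bound (m : ℕ) (hm : 0 < m) (x : ℝ) (hx : 0 ≤ x) :
    (1 - Real.exp (-((m : ℝ) * ((Nat.factorial m : ℝ)) ^ (-(1 / (m : ℝ))) * x))) ^ m ≤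
      ((gammaMeasure (m : ℝ) (m : ℝ)) (Set.Iio x)).toReal ∧
    ((gammaMeasure (m : ℝ) (m : ℝ)) (Set.Ioi x)).toReal ≤
      ∑ n ∈ Finset.Icc 1 m, (-1 : ℝ) ^ (n + 1) * (Nat.choose m n : ℝ) *
        Real.exp (-((n : ℝ) * ((m : ℝ) * ((Nat.factorial m : ℝ)) ^ (-(1 / (m : ℝ)))) * x)) := by
  set l : ℝ := (m ! : ℝ) ^ (-(1 / (m : ℝ)))
  have hm' : (0 : ℝ) < m := Nat.cast_pos.mpr hm
  have hl : 0 < l := by positivity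
  have hbound := maxExpCDF_le_erlangCDF hm hl
    (rpow_neg_one_div_pow_mul_self (by positivity) hm.ne') (mul_nonneg hm'.le hx)
  have hmax : maxExpCDF m l (m * x) = (1 - exp (-(m * l * x))) ^ m := by
    rw [maxExpCDF, mul_left_comm, mul_assoc]
  refine ⟨?_, ?_⟩
  · rwa [gammaMeasure_Iio_toReal hm hm' hx, ← hmax]
  · rw [gammaMeasure_Ioi_toReal hm hm' hx]
    calc 1 - erlangCDF m (m * x) ≤ 1 - (1 - exp (-(m * l * x))) ^ m := by linarith
      _ = _ := by
        rw [one_sub_one_sub_pow]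
        refine Finset.sum_congr rfl fun n _ => ?_
        rw [← exp_nat_mul]
        ring_nf
end
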